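/- arXiv:1412.0310 — 2 statements merged into one kernel-verified Lean document; each statement's English description precedes it below -/
import Mathlib

section
/- Let p, q ≥ 2 be integers, μ ∈ ℂ ∖ {0}, r = gcd(p−1, q−1), A = 1/p^{1/(p−1)}, B = 1/q^{1/(q−1)}, and c_k = (−2·arg μ + 2πk)/(p−1) for k ∈ ℤ. A point (u, v) ∈ ℂ × ℂ is a singular point of P(u,v;μ) if and only if there exist k ∈ {0, 1, …, r−1} and θ ∈ ℝ such that u = A·e^{i((q−1)θ/r + c_k)} and v = B·e^{i(p−1)θ/r}. In particular, the set of singular points of P lies on the torus {(u,v) : |u| = A, |v| = B} and is the union of the r curves C_k parametrized as above. -/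
/-! The real differential of `P` at `(u, v)` is `(h, k) ↦ μ (a h + h̄) + (b k + k̄)` with
`a = p u^(p-1)` and `b = q v^(q-1)`. It fails to be onto `ℂ` exactly when some `w ≠ 0` is
orthogonal to its image, i.e. `μ a w̄ + μ̄ w = 0` and `b w̄ + w = 0`, and such a `w` exists iff
`|b| = 1` and `μ a = μ̄ b`. The first condition forces `|v| = B`, the second then forces `|u| = A`
and `(p-1) arg u ≡ -2 arg μ + (q-1) arg v (mod 2π)`. Bézout's identity for `p-1` and `q-1`
solves this congruence by a common parameter `θ`; the class modulo `r` of the winding number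
selects the curve `C_k`. -/

open Complex ComplexConjugate
open scoped Real

theorem LinearMap.not_surjective_iff_exists_ne_zero_inner_eq_zero {𝕜 E F : Type*} [RCLike 𝕜]
    [AddCommGroup E] [Module 𝕜 E] [NormedAddCommGroup F] [InnerProductSpace 𝕜 F]
    [FiniteDimensional 𝕜 F] (T : E →ₗ[𝕜] F) :
    ¬ Function.Surjective T ↔ ∃ w ≠ 0, ∀ x, inner 𝕜 (T x) w = 0 := by
  rw [← LinearMap.range_eq_top, ← Submodule.orthogonal_eq_bot_iff, Submodule.eq_bot_iff]
  simp only [Submodule.mem_orthogonal, LinearMap.mem_range, forall_exists_index,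
    forall_apply_eq_imp_iff]
  push Not
  simp only [and_comm]

namespace Complex

theorem real_inner_mul_add_mul_conj (a b h w : ℂ) :
    inner ℝ (a * h + b * conj h) w = ((a * conj w + conj b * w) * h).re := by
  rw [Complex.inner]
  simp only [mul_re, add_re, conj_re, conj_im, map_add, map_mul, mul_im, add_im]
  ring

theorem forall_re_mul_add_re_mul_eq_zero_iff {α β : ℂ} :
    (∀ h k : ℂ, (α * h).re + (β * k).re = 0) ↔ α = 0 ∧ β = 0 := by
  refine ⟨fun H => ⟨?_, ?_⟩, fun ⟨hα, hβ⟩ _ _ => by simp [hα, hβ]⟩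
  · simpa [mul_conj, ← ofReal_pow] using H (conj α) 0
  · simpa [mul_conj] using H 0 (conj β)

theorem exists_ne_zero_mul_conj_add_self_eq_zero_iff (b : ℂ) :
    (∃ w ≠ 0, b * conj w + w = 0) ↔ ‖b‖ = 1 := by
  constructor
  · rintro ⟨w, hw, hbw⟩
    have : ‖b‖ * ‖w‖ = 1 * ‖w‖ := by
      rw [← norm_conj w, ← norm_mul, eq_neg_of_add_eq_zero_left hbw, norm_neg, norm_conj, one_mul]
    exact mul_right_cancel₀ (norm_ne_zero_iff.mpr hw) this
  · intro hb
    -- a square root `s` of `-b` lies on the unit circle, so `b * conj s = -s ^ 2 * s⁻¹ = -s`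
    set s := (-b) ^ (2⁻¹ : ℂ)
    have hs : s ^ 2 = -b := cpow_ofNat_inv_pow _ 2
    have hs_norm : ‖s‖ = 1 := by
      rw [← pow_left_inj₀ (norm_nonneg s) zero_le_one two_ne_zero, ← norm_pow, hs, norm_neg, hb,
        one_pow]
    have hs0 : s ≠ 0 := norm_ne_zero_iff.mp (by rw [hs_norm]; exact one_ne_zero)
    have hs_conj : s * conj s = 1 := by rw [mul_conj, normSq_eq_norm_sq, hs_norm]; simp
    exact ⟨s, hs0, by linear_combination (-s) * hs_conj + conj s * hs⟩

theorem exists_ne_zero_conj_relations_iff (a b μ : ℂ) :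
    (∃ w ≠ 0, a * conj w + conj μ * w = 0 ∧ b * conj w + w = 0) ↔ ‖b‖ = 1 ∧ a = conj μ * b := by
  rw [← exists_ne_zero_mul_conj_add_self_eq_zero_iff]
  constructor
  · rintro ⟨w, hw, h₁, h₂⟩
    refine ⟨⟨w, hw, h₂⟩, mul_right_cancel₀ (b := conj w) (by simpa using hw) ?_⟩
    linear_combination h₁ - conj μ * h₂
  · rintro ⟨⟨w, hw, h₂⟩, rfl⟩
    exact ⟨w, hw, by linear_combination conj μ * h₂, h₂⟩

theorem exp_I_mul_eq_exp_I_mul_iff (s t : ℝ) :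
    exp (I * s) = exp (I * t) ↔ ∃ n : ℤ, s = t + 2 * π * n := by
  rw [exp_eq_exp_iff_exists_int]
  refine exists_congr fun n => ?_
  rw [show I * t + n * (2 * π * I) = I * ((t + 2 * π * n : ℝ) : ℂ) by push_cast; ring,
    mul_right_inj' I_ne_zero, ofReal_inj]

theorem exp_I_mul_add_two_pi_mul_int (t : ℝ) (n : ℤ) :
    exp (I * ((t + 2 * π * n : ℝ) : ℂ)) = exp (I * t) :=
  (exp_I_mul_eq_exp_I_mul_iff _ _).mpr ⟨n, rfl⟩

theorem exists_eq_mul_exp_I_mul_of_norm_eq {z : ℂ} {R : ℝ} (h : ‖z‖ = R) :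
    ∃ t : ℝ, z = R * exp (I * t) :=
  ⟨arg z, by rw [← h, mul_comm I]; exact (norm_mul_exp_arg_mul_I z).symm⟩

theorem conj_eq_mul_exp_I_mul_arg (μ : ℂ) : conj μ = μ * exp (I * ((-2 * arg μ : ℝ) : ℂ)) := by
  -- freezing `arg μ` lets the polar form be substituted for the other occurrences of `μ` only
  set α := arg μ with hα
  rw [← norm_mul_exp_arg_mul_I μ, ← hα, map_mul, ← exp_conj, conj_ofReal, mul_assoc,
    ← Complex.exp_add]
  congr 2
  simp only [map_mul, conj_ofReal, conj_I]
  push_cast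
  ring

theorem mul_exp_I_mul_eq_conj_mul_exp_I_mul_iff {μ : ℂ} (hμ : μ ≠ 0) (s t : ℝ) :
    μ * exp (I * s) = conj μ * exp (I * t) ↔ ∃ M : ℤ, s = -2 * arg μ + t + 2 * π * M := by
  rw [conj_eq_mul_exp_I_mul_arg, mul_assoc, mul_right_inj' hμ, ← Complex.exp_add, ← mul_add,
    ← ofReal_add, exp_I_mul_eq_exp_I_mul_iff]

end Complex

theorem hasFDerivAt_pow_add_conj (n : ℕ) (z : ℂ) :
    HasFDerivAt (fun w : ℂ => w ^ n + conj w)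
      (((n : ℂ) * z ^ (n - 1)) • ContinuousLinearMap.id ℝ ℂ + conjCLE.toContinuousLinearMap) z := by
  refine (((hasDerivAt_pow n z).hasFDerivAt.restrictScalars ℝ).add
    conjCLE.hasFDerivAt).congr_fderiv ?_
  ext1 h
  simp [mul_comm]

theorem fderiv_polynomial_apply (p q : ℕ) (μ u v h k : ℂ) :
    fderiv ℝ (fun z : ℂ × ℂ => μ * (z.1 ^ p + conj z.1) + z.2 ^ q + conj z.2) (u, v) (h, k)
      = μ * (p * u ^ (p - 1) * h + conj h) + (q * v ^ (q - 1) * k + conj k) := by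
  have hP : HasFDerivAt (fun z : ℂ × ℂ => μ * (z.1 ^ p + conj z.1) + (z.2 ^ q + conj z.2)) _
      (u, v) :=
    (((hasFDerivAt_pow_add_conj p u).comp (f := Prod.fst) (u, v) hasFDerivAt_fst).const_mul μ).add
      ((hasFDerivAt_pow_add_conj q v).comp (f := Prod.snd) (u, v) hasFDerivAt_snd)
  simp only [add_assoc, hP.fderiv]
  simp [mul_add]

theorem not_surjective_fderiv_polynomial_iff (p q : ℕ) (μ u v : ℂ) :
    ¬ Function.Surjective (fderiv ℝ (fun z : ℂ × ℂ =>
        μ * (z.1 ^ p + conj z.1) + z.2 ^ q + conj z.2) (u, v)) ↔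
      ‖(q : ℂ) * v ^ (q - 1)‖ = 1 ∧ μ * (p * u ^ (p - 1)) = conj μ * (q * v ^ (q - 1)) := by
  have hD : ∀ h k, fderiv ℝ (fun z : ℂ × ℂ => μ * (z.1 ^ p + conj z.1) + z.2 ^ q + conj z.2)
      (u, v) (h, k) =
        μ * (p * u ^ (p - 1)) * h + μ * conj h + (q * v ^ (q - 1) * k + 1 * conj k) := by
    intro h k
    rw [fderiv_polynomial_apply]
    ring
  rw [← exists_ne_zero_conj_relations_iff, ← ContinuousLinearMap.coe_coe,
    LinearMap.not_surjective_iff_exists_ne_zero_inner_eq_zero]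
  simp only [ContinuousLinearMap.coe_coe, Prod.forall, hD, inner_add_left,
    ↓real_inner_mul_add_mul_conj, forall_re_mul_add_re_mul_eq_zero_iff]
  simp only [map_one, one_mul]

noncomputable def criticalRadius (n : ℕ) : ℝ := 1 / (n : ℝ) ^ (1 / ((n : ℝ) - 1))

theorem criticalRadius_pos {n : ℕ} (hn : 0 < n) : 0 < criticalRadius n := by
  unfold criticalRadius
  positivity

theorem criticalRadius_pow {n : ℕ} (hn : 2 ≤ n) : criticalRadius n ^ (n - 1) = 1 / n := by
  rw [criticalRadius, ← Nat.cast_pred (by omega), div_pow, one_pow, one_div (((n - 1 : ℕ) : ℝ)),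
    Real.rpow_inv_natCast_pow (Nat.cast_nonneg n) (by omega)]

theorem norm_natCast_mul_pow_pred_eq_one_iff {n : ℕ} (hn : 2 ≤ n) (v : ℂ) :
    ‖(n : ℂ) * v ^ (n - 1)‖ = 1 ↔ ‖v‖ = criticalRadius n := by
  rw [← pow_left_inj₀ (norm_nonneg v) (criticalRadius_pos (by omega)).le (by omega : n - 1 ≠ 0),
    criticalRadius_pow hn, norm_mul, norm_pow, Complex.norm_natCast,
    eq_div_iff (Nat.cast_ne_zero.mpr (by omega)), mul_comm]

theorem natCast_mul_criticalRadius_mul_exp_pow {n : ℕ} (hn : 2 ≤ n) (t : ℝ) :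
    (n : ℂ) * (criticalRadius n * exp (I * t)) ^ (n - 1) =
      exp (I * ((((n : ℝ) - 1) * t : ℝ) : ℂ)) := by
  rw [mul_pow, ← ofReal_pow, criticalRadius_pow hn, ← Complex.exp_nat_mul, ← mul_assoc]
  have : (n : ℂ) ≠ 0 := Nat.cast_ne_zero.mpr (by omega)
  push_cast [Nat.cast_pred (by omega : 0 < n)]
  field_simp

theorem critical_iff_exists_angles {p q : ℕ} (hp : 2 ≤ p) (hq : 2 ≤ q) {μ : ℂ} (hμ : μ ≠ 0)
    (u v : ℂ) :
    (‖(q : ℂ) * v ^ (q - 1)‖ = 1 ∧ μ * (p * u ^ (p - 1)) = conj μ * (q * v ^ (q - 1))) ↔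
      ∃ φ ψ : ℝ, u = criticalRadius p * exp (I * φ) ∧ v = criticalRadius q * exp (I * ψ) ∧
        ∃ M : ℤ, ((p : ℝ) - 1) * φ = -2 * arg μ + ((q : ℝ) - 1) * ψ + 2 * π * M := by
  constructor
  · rintro ⟨hv, huv⟩
    obtain ⟨ψ, rfl⟩ :=
      exists_eq_mul_exp_I_mul_of_norm_eq ((norm_natCast_mul_pow_pred_eq_one_iff hq v).mp hv)
    rw [natCast_mul_criticalRadius_mul_exp_pow hq] at huv
    have hu : ‖(p : ℂ) * u ^ (p - 1)‖ = 1 := by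
      have := congrArg norm huv
      rwa [norm_mul μ, norm_mul (conj μ), norm_conj, norm_exp_I_mul_ofReal,
        mul_right_inj' (norm_ne_zero_iff.mpr hμ)] at this
    obtain ⟨φ, rfl⟩ :=
      exists_eq_mul_exp_I_mul_of_norm_eq ((norm_natCast_mul_pow_pred_eq_one_iff hp u).mp hu)
    rw [natCast_mul_criticalRadius_mul_exp_pow hp, mul_exp_I_mul_eq_conj_mul_exp_I_mul_iff hμ] at huv
    exact ⟨φ, ψ, rfl, rfl, huv⟩
  · rintro ⟨φ, ψ, rfl, rfl, hM⟩
    rw [natCast_mul_criticalRadius_mul_exp_pow hp, natCast_mul_criticalRadius_mul_exp_pow hq,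
      norm_exp_I_mul_ofReal, mul_exp_I_mul_eq_conj_mul_exp_I_mul_iff hμ]
    exact ⟨rfl, hM⟩

theorem exists_lt_gcd_of_mul_eq {p' q' : ℕ} (hp' : 0 < p') {x φ ψ : ℝ} {M : ℤ}
    (hM : p' * φ = x + q' * ψ + 2 * π * M) :
    ∃ k < p'.gcd q', ∃ θ : ℝ, ∃ m n : ℤ,
      q' * θ / p'.gcd q' + (x + 2 * π * k) / p' = φ + 2 * π * m ∧
        p' * θ / p'.gcd q' = ψ + 2 * π * n := by
  set r := p'.gcd q'
  have hr : 0 < r := Nat.gcd_pos_of_pos_left q' hp'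
  obtain ⟨k, hk⟩ := Int.eq_ofNat_of_zero_le (Int.emod_nonneg M (by omega : (r : ℤ) ≠ 0))
  have hkr : k < r := by have := Int.emod_lt_of_pos M (by omega : (0 : ℤ) < r); omega
  set t := M / r
  have hMt : (M : ℝ) = r * t + k := by
    rw [← Int.mul_ediv_add_emod M r, hk]
    push_cast
    ring
  have hbez : (r : ℝ) = p' * Nat.gcdA p' q' + q' * Nat.gcdB p' q' := by
    exact_mod_cast Nat.gcd_eq_gcd_ab p' q'
  -- with `M = r t + k` and Bézout `r = p' α + q' β`, the choice `p' θ / r = ψ + 2π t β`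
  -- makes the first angle `φ - 2π t α`
  refine ⟨k, hkr, r * (ψ + 2 * π * (t * Nat.gcdB p' q')) / p', -(t * Nat.gcdA p' q'),
    t * Nat.gcdB p' q', ?_, ?_⟩
  · field_simp
    push_cast
    linear_combination (-1 : ℝ) * hM + (-2 * π) * hMt + (-2 * π * t) * hbez
  · field_simp
    push_cast
    ring

theorem exists_angles_iff_exists_lt_gcd {p' q' : ℕ} (hp' : 0 < p') (x : ℝ) (a b z w : ℂ) :
    (∃ φ ψ : ℝ, z = a * exp (I * φ) ∧ w = b * exp (I * ψ) ∧
        ∃ M : ℤ, (p' : ℝ) * φ = x + q' * ψ + 2 * π * M) ↔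
      ∃ k < p'.gcd q', ∃ θ : ℝ,
        z = a * exp (I * ((q' * θ / p'.gcd q' + (x + 2 * π * k) / p' : ℝ) : ℂ)) ∧
          w = b * exp (I * ((p' * θ / p'.gcd q' : ℝ) : ℂ)) := by
  constructor
  · rintro ⟨φ, ψ, rfl, rfl, M, hM⟩
    obtain ⟨k, hk, θ, m, n, hφ, hψ⟩ := exists_lt_gcd_of_mul_eq hp' hM
    exact ⟨k, hk, θ, by rw [hφ, exp_I_mul_add_two_pi_mul_int],
      by rw [hψ, exp_I_mul_add_two_pi_mul_int]⟩
  · rintro ⟨k, -, θ, rfl, rfl⟩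
    refine ⟨_, _, rfl, rfl, k, ?_⟩
    have : (p' : ℝ) ≠ 0 := by positivity
    field_simp
    push_cast
    ring

/-- The set of singular points of `P(u,v;μ) = μ(u^p + ū) + v^q + v̄`
is the union of the `r = gcd(p-1, q-1)` curves `C_k` on the torus `{|u| = A, |v| = B}`,
given by `u = A e^{i((q-1)θ/r + c_k)}`, `v = B e^{i(p-1)θ/r}`. -/
theorem singular_set_parametrization
    (p q : ℕ) (hp : 2 ≤ p) (hq : 2 ≤ q) (μ : ℂ) (hμ : μ ≠ 0)
    (r : ℕ) (hr : r = Nat.gcd (p - 1) (q - 1))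
    (A B : ℝ)
    (hA : A = 1 / (p : ℝ) ^ ((1 : ℝ) / ((p : ℝ) - 1)))
    (hB : B = 1 / (q : ℝ) ^ ((1 : ℝ) / ((q : ℝ) - 1)))
    (c : ℕ → ℝ)
    (hc : ∀ k : ℕ, c k = (-2 * Complex.arg μ + 2 * Real.pi * k) / ((p : ℝ) - 1))
    (u v : ℂ) :
    (¬ Function.Surjective
      ⇑(fderiv ℝ (fun z : ℂ × ℂ =>
          μ * (z.1 ^ p + (starRingEnd ℂ) z.1) + z.2 ^ q + (starRingEnd ℂ) z.2) (u, v)))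
    ↔ ∃ k < r, ∃ θ : ℝ,
        u = (A : ℂ) * Complex.exp (Complex.I * ((((q : ℝ) - 1) * θ / r + c k : ℝ) : ℂ)) ∧
        v = (B : ℂ) * Complex.exp (Complex.I * ((((p : ℝ) - 1) * θ / r : ℝ) : ℂ)) := by
  subst hr
  obtain rfl : A = criticalRadius p := hA
  obtain rfl : B = criticalRadius q := hB
  simp only [hc]
  rw [not_surjective_fderiv_polynomial_iff, critical_iff_exists_angles hp hq hμ,
    ← Nat.cast_pred (R := ℝ) (by omega : 0 < p), ← Nat.cast_pred (R := ℝ) (by omega : 0 < q)]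
  exact exists_angles_iff_exists_lt_gcd (by omega) _ _ _ _ _
end

section
/- Let p > q ≥ 2 be integers, r = gcd(p−1, q−1), m = (p−1)(q+1)/(2r), n = (p+1)(q−1)/(2r), A = 1/p^{1/(p−1)}, B = 1/q^{1/(q−1)}, C₀ = ((p−1)B)/((q−1)A) > 0, c ∈ ℝ, and ε ∈ {1, −1}. Define T(θ, s) = ε·s·sin(nθ + c) + C₀·sin(mθ). Then the number of solutions of T(θ, s) = 0 in θ ∈ [0, 2π) is monotone decreasing in s ∈ (0, ∞): for all 0 < s₁ ≤ s₂, Set.ncard {θ ∈ [0, 2π) | T(θ, s₂) = 0} ≤ Set.ncard {θ ∈ [0, 2π) | T(θ, s₁) = 0}. -/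
/-!
Write `T(θ, s) = ε · P_s(θ)` with `P_s(θ) = s sin(nθ + c) + γ sin(mθ)` and `γ = ε C₀`. Off the
zeros of `sin(nθ + c)`, `θ` is a zero of `P_s` exactly when `ψ(θ) = s`, where
`ψ(θ) = -γ sin(mθ) / sin(nθ + c)`; common zeros of the two sines are zeros for every `s`.

Since `n < m`, at a critical point of `ψ` with value `v > 0` the smooth function
`(ψ - v) sin²(nθ + c)` has second derivative `-v (m² - n²) sin²(nθ + c) < 0`, so `ψ` has no local
minimum with a positive value. At a common zero `ψ` extends continuously and has a strict local
maximum, and at the other zeros of `sin(nθ + c)` it has a pole. Hence from a zero `θ` of `P_{s₂}`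
that is not a common zero, walking inside the interval between consecutive zeros of
`sin(nθ + c)` in the direction in which `ψ` decreases, one meets the level `s₁ < s₂`; the nearest
such point defines an injection from the zeros of `P_{s₂}` into those of `P_{s₁}`.

As `2n` and `m - n` are integers, the zero sets are `2π`-periodic, so counting over `[0, 2π)` is
the same as counting over a period that starts at a zero of `sin(nθ + c)`.
-/

open Real Set Filter Topology

section Calculus

variable {u : ℝ → ℝ} {x₀ : ℝ}

lemma HasDerivAt.eventually_nhdsLT_lt_of_pos {u' : ℝ} (h : HasDerivAt u u' x₀) (hu' : 0 < u') :
    ∀ᶠ x in 𝓝[<] x₀, u x < u x₀ := by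
  filter_upwards [((hasDerivAt_iff_tendsto_slope.1 h).mono_left (nhdsLT_le_nhdsNE x₀)).eventually
    (lt_mem_nhds hu'), self_mem_nhdsWithin] with x hslope hx
  exact (slope_pos_iff_gt hx).1 hslope

lemma HasDerivAt.eventually_nhdsGT_lt_of_neg {u' : ℝ} (h : HasDerivAt u u' x₀) (hu' : u' < 0) :
    ∀ᶠ x in 𝓝[>] x₀, u x < u x₀ := by
  filter_upwards [((hasDerivAt_iff_tendsto_slope.1 h).mono_left (nhdsGT_le_nhdsNE x₀)).eventually
    (gt_mem_nhds hu'), self_mem_nhdsWithin] with x hslope hx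
  rw [slope_def_field, div_lt_iff₀ (sub_pos.2 hx)] at hslope
  linarith

lemma eventually_nhdsNE_lt_of_hasDerivAt_of_neg {u' : ℝ → ℝ} {u'' : ℝ}
    (hu : ∀ x, HasDerivAt u (u' x) x) (hu' : HasDerivAt u' u'' x₀) (hcrit : u' x₀ = 0)
    (hneg : u'' < 0) : ∀ᶠ x in 𝓝[≠] x₀, u x < u x₀ := by
  have hsign : ∀ᶠ y in 𝓝[≠] x₀, u' y / (y - x₀) < 0 := by
    filter_upwards [(hasDerivAt_iff_tendsto_slope.1 hu').eventually (gt_mem_nhds hneg)] with y hy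
    simpa [slope_def_field, hcrit] using hy
  obtain ⟨δ, hδ, hball⟩ := Metric.eventually_nhds_iff_ball.1 (eventually_nhdsWithin_iff.1 hsign)
  have hcont : Continuous u := continuous_iff_continuousAt.2 fun x => (hu x).continuousAt
  rw [eventually_nhdsWithin_iff, Metric.eventually_nhds_iff_ball]
  refine ⟨δ, hδ, fun x hx hne => ?_⟩
  rw [Real.ball_eq_Ioo] at hx hball
  rcases lt_or_gt_of_ne hne with hlt | hgt
  · refine strictMonoOn_of_deriv_pos (convex_Icc x x₀) hcont.continuousOn (fun y hy => ?_)
      ⟨le_rfl, hlt.le⟩ ⟨hlt.le, le_rfl⟩ hlt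
    rw [interior_Icc] at hy
    have := hball y ⟨by linarith [hx.1, hy.1], by linarith [hy.2]⟩ hy.2.ne
    rw [(hu y).deriv]
    simpa using (div_lt_iff_of_neg (sub_neg.2 hy.2)).1 this
  · refine strictAntiOn_of_deriv_neg (convex_Icc x₀ x) hcont.continuousOn (fun y hy => ?_)
      ⟨le_rfl, hgt.le⟩ ⟨hgt.le, le_rfl⟩ hgt
    rw [interior_Icc] at hy
    have := hball y ⟨by linarith [hy.1], by linarith [hx.2, hy.2]⟩ hy.1.ne'
    rw [(hu y).deriv]
    simpa using (div_lt_iff₀ (sub_pos.2 hy.1)).1 this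

lemma forall_lt_of_forall_ne_of_continuousOn {F : ℝ → ℝ} {a b s x₁ : ℝ}
    (hF : ContinuousOn F (Icc a b)) (hx₁ : x₁ ∈ Icc a b) (hlt : s < F x₁)
    (hne : ∀ x ∈ Icc a b, F x ≠ s) : ∀ x ∈ Icc a b, s < F x := by
  intro x hx
  by_contra! hle
  obtain ⟨y, hy, hFy⟩ := isPreconnected_Icc.intermediate_value hx hx₁ hF ⟨hle, hlt.le⟩
  exact hne y hy hFy

lemma min_le_of_forall_not_isLocalMin {F : ℝ → ℝ} {a b : ℝ} (hab : a ≤ b)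
    (hF : ContinuousOn F (Icc a b)) (hmin : ∀ ξ ∈ Ioo a b, ¬ IsLocalMin F ξ) :
    ∀ x ∈ Icc a b, min (F a) (F b) ≤ F x := by
  obtain ⟨ξ, hξ, hξmin⟩ := isCompact_Icc.exists_isMinOn (nonempty_Icc.2 hab) hF
  intro x hx
  rcases eq_or_lt_of_le hξ.1 with rfl | hlo
  · exact (min_le_left _ _).trans (hξmin hx)
  rcases eq_or_lt_of_le hξ.2 with rfl | hhi
  · exact (min_le_right _ _).trans (hξmin hx)
  exact absurd (hξmin.isLocalMin (Icc_mem_nhds hlo hhi)) (hmin ξ ⟨hlo, hhi⟩)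

lemma exists_isGreatest_Ioc_eq {F : ℝ → ℝ} {a b s x₁ : ℝ} (hF : ∀ x ∈ Ioc a b, ContinuousAt F x)
    (hx₁ : x₁ ∈ Ioc a b) (hFx₁ : F x₁ = s) : ∃ φ, IsGreatest {x ∈ Ioc a b | F x = s} φ := by
  have hK : IsCompact {x ∈ Icc x₁ b | F x = s} :=
    isCompact_Icc.of_isClosed_subset ((ContinuousOn.preimage_isClosed_of_isClosed
      (fun x hx => (hF x ⟨hx₁.1.trans_le hx.1, hx.2⟩).continuousWithinAt) isClosed_Icc
      isClosed_singleton)) (sep_subset _ _)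
  obtain ⟨φ, ⟨hφ, hFφ⟩, hmax⟩ := hK.exists_isGreatest ⟨x₁, ⟨le_rfl, hx₁.2⟩, hFx₁⟩
  refine ⟨φ, ⟨⟨hx₁.1.trans_le hφ.1, hφ.2⟩, hFφ⟩, fun y ⟨hy, hFy⟩ => ?_⟩
  rcases le_or_gt x₁ y with h | h
  · exact hmax ⟨⟨h, hy.2⟩, hFy⟩
  · exact h.le.trans hφ.1

lemma exists_isLeast_Ico_eq {F : ℝ → ℝ} {a b s x₁ : ℝ} (hF : ∀ x ∈ Ico a b, ContinuousAt F x)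
    (hx₁ : x₁ ∈ Ico a b) (hFx₁ : F x₁ = s) : ∃ φ, IsLeast {x ∈ Ico a b | F x = s} φ := by
  have hK : IsCompact {x ∈ Icc a x₁ | F x = s} :=
    isCompact_Icc.of_isClosed_subset ((ContinuousOn.preimage_isClosed_of_isClosed
      (fun x hx => (hF x ⟨hx.1, hx.2.trans_lt hx₁.2⟩).continuousWithinAt) isClosed_Icc
      isClosed_singleton)) (sep_subset _ _)
  obtain ⟨φ, ⟨hφ, hFφ⟩, hmin⟩ := hK.exists_isLeast ⟨x₁, ⟨hx₁.1, le_rfl⟩, hFx₁⟩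
  refine ⟨φ, ⟨⟨hφ.1, hφ.2.trans_lt hx₁.2⟩, hFφ⟩, fun y ⟨hy, hFy⟩ => ?_⟩
  rcases le_or_gt y x₁ with h | h
  · exact hmin ⟨⟨hy.1, h⟩, hFy⟩
  · exact hφ.2.trans h.le

end Calculus

lemma ncard_sep_Ico_eq_of_periodic {α : Type*} [AddCommGroup α] [LinearOrder α]
    [IsOrderedAddMonoid α] [Archimedean α] {p : α} (hp : 0 < p) {P : α → Prop}
    (hP : Function.Periodic P p) (a b : α) :
    {x ∈ Ico a (a + p) | P x}.ncard = {x ∈ Ico b (b + p) | P x}.ncard := by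
  have hmem : ∀ c x, P (toIcoMod hp c x) ↔ P x := fun c x => by
    rw [toIcoMod, hP.sub_zsmul_eq]
  refine Set.BijOn.ncard_eq (f := toIcoMod hp b) (Set.InvOn.bijOn (f' := toIcoMod hp a)
    ⟨fun x hx => ?_, fun x hx => ?_⟩ (fun x hx => ⟨toIcoMod_mem_Ico _ _ _, (hmem b x).2 hx.2⟩)
    (fun x hx => ⟨toIcoMod_mem_Ico _ _ _, (hmem a x).2 hx.2⟩))
  all_goals rw [toIcoMod_toIcoMod, (toIcoMod_eq_self hp).2 hx.1]

lemma Real.hasDerivAt_sin_mul_add (n c θ : ℝ) :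
    HasDerivAt (fun x => sin (n * x + c)) (n * cos (n * θ + c)) θ := by
  simpa [mul_comm] using (((hasDerivAt_id θ).const_mul n).add_const c).sin

lemma Real.hasDerivAt_cos_mul_add (n c θ : ℝ) :
    HasDerivAt (fun x => cos (n * x + c)) (-(n * sin (n * θ + c))) θ := by
  simpa [mul_comm] using (((hasDerivAt_id θ).const_mul n).add_const c).cos

lemma Real.cos_ne_zero_of_sin_eq_zero {x : ℝ} (h : sin x = 0) : cos x ≠ 0 := by
  intro hc
  simpa [h, hc] using sin_sq_add_cos_sq x

lemma Real.sin_mul_sub_sin_pos {m n z : ℝ} (hn : 0 < n) (hnm : n < m) (hz : z ≠ 0)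
    (hzm : |z| < π / m) : 0 < sin (n * z) * (m * sin (n * z) - n * sin (m * z)) := by
  have hm : 0 < m := hn.trans hnm
  suffices h : ∀ w, 0 < w → w < π / m → 0 < sin (n * w) * (m * sin (n * w) - n * sin (m * w)) by
    rcases lt_or_gt_of_ne hz with hneg | hpos
    · have := h (-z) (by linarith) (by rwa [abs_of_neg hneg] at hzm)
      simp only [mul_neg, sin_neg] at this
      linarith
    · exact h z hpos (by rwa [abs_of_pos hpos] at hzm)
  intro w hw hwm
  have hmw : m * w < π := by rwa [lt_div_iff₀ hm, mul_comm] at hwm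
  have hnw : n * w < m * w := by nlinarith
  have hsin : 0 < sin (n * w) := sin_pos_of_pos_of_lt_pi (by positivity) (by linarith)
  have hderiv : ∀ x, HasDerivAt (fun x => m * sin (n * x) - n * sin (m * x))
      (m * n * (cos (n * x) - cos (m * x))) x := fun x => by
    have hn' := hasDerivAt_sin_mul_add n 0 x
    have hm' := hasDerivAt_sin_mul_add m 0 x
    simp only [add_zero] at hn' hm'
    exact ((hn'.const_mul m).sub (hm'.const_mul n)).congr_deriv (by ring)
  have hmono : StrictMonoOn (fun x => m * sin (n * x) - n * sin (m * x)) (Icc 0 (π / m)) := by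
    refine strictMonoOn_of_deriv_pos (convex_Icc _ _)
      (fun x _ => (hderiv x).continuousAt.continuousWithinAt) fun x hx => ?_
    rw [interior_Icc] at hx
    rw [(hderiv x).deriv]
    have hmx : m * x < π := by have := hx.2; rw [lt_div_iff₀ hm] at this; linarith
    have := cos_lt_cos_of_nonneg_of_le_pi (by nlinarith [hx.1]) hmx.le
      (by nlinarith [hx.1] : n * x < m * x)
    have := mul_pos hm hn
    nlinarith
  have := hmono ⟨le_rfl, by positivity⟩ ⟨hw.le, hwm.le⟩ hw
  simp only [mul_zero, sin_zero, sub_self] at this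
  positivity

namespace TrigPencil

noncomputable section

def pencil (γ c m n s θ : ℝ) : ℝ := s * sin (n * θ + c) + γ * sin (m * θ)

def pencilDeriv (γ c m n s θ : ℝ) : ℝ := s * n * cos (n * θ + c) + γ * m * cos (m * θ)

/-- Off the zeros of `sin (n θ + c)` this is the unique `s` with `pencil s θ = 0`; on them it is
the l'Hôpital value, which makes it continuous at the common zeros of the two sines. -/
def zeroLevel (γ c m n θ : ℝ) : ℝ :=
  if sin (n * θ + c) = 0 then -(γ * m * cos (m * θ)) / (n * cos (n * θ + c))
  else -(γ * sin (m * θ)) / sin (n * θ + c)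

/-- Equal to `(zeroLevel θ - s) * sin (n θ + c) ^ 2` off the zeros of `sin (n θ + c)`, but smooth
everywhere. -/
def levelExcess (γ c m n s θ : ℝ) : ℝ := -pencil γ c m n s θ * sin (n * θ + c)

/-- Left end of the interval between consecutive zeros of `sin (n θ + c)` that contains `θ`
(`θ` itself when it is a zero). -/
def windowStart (c n θ : ℝ) : ℝ := (⌊(n * θ + c) / π⌋ * π - c) / n

def windowEnd (c n θ : ℝ) : ℝ := windowStart c n θ + π / n

/-- For `s₁ < s₂`, sends a zero `θ` of `pencil s₂` to a zero of `pencil s₁`. Common zeros of the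
two sines stay put; otherwise we take the nearest point of level `s₁` in the window of `θ` on the
side where `zeroLevel` decreases, the derivative of `zeroLevel` at `θ` being
`-pencilDeriv s₂ θ / sin (n θ + c)`. -/
def matchPoint (γ c m n s₁ s₂ θ : ℝ) : ℝ :=
  if sin (n * θ + c) = 0 then θ
  else if pencilDeriv γ c m n s₂ θ * sin (n * θ + c) ≤ 0 then
    sSup {x ∈ Ioc (windowStart c n θ) θ | zeroLevel γ c m n x = s₁}
  else sInf {x ∈ Ico θ (windowEnd c n θ) | zeroLevel γ c m n x = s₁}

variable {γ c m n : ℝ}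

lemma hasDerivAt_pencil (γ c m n s θ : ℝ) :
    HasDerivAt (pencil γ c m n s) (pencilDeriv γ c m n s θ) θ := by
  have hsin := hasDerivAt_sin_mul_add m 0 θ
  simp only [add_zero] at hsin
  exact (((hasDerivAt_sin_mul_add n c θ).const_mul s).add (hsin.const_mul γ)).congr_deriv
    (by simp only [pencilDeriv]; ring)

lemma hasDerivAt_pencilDeriv (γ c m n s θ : ℝ) :
    HasDerivAt (pencilDeriv γ c m n s)
      (-(s * n ^ 2 * sin (n * θ + c)) - γ * m ^ 2 * sin (m * θ)) θ := by
  have hcos := hasDerivAt_cos_mul_add m 0 θ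
  simp only [add_zero] at hcos
  exact (((hasDerivAt_cos_mul_add n c θ).const_mul (s * n)).add
    (hcos.const_mul (γ * m))).congr_deriv (by ring)

lemma hasDerivAt_levelExcess (γ c m n s θ : ℝ) :
    HasDerivAt (levelExcess γ c m n s)
      (-pencilDeriv γ c m n s θ * sin (n * θ + c)
        - pencil γ c m n s θ * (n * cos (n * θ + c))) θ :=
  ((hasDerivAt_pencil γ c m n s θ).neg.mul (hasDerivAt_sin_mul_add n c θ)).congr_deriv
    (by simp only [Pi.neg_apply]; ring)

lemma zeroLevel_of_sin_ne_zero {θ : ℝ} (hS : sin (n * θ + c) ≠ 0) :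
    zeroLevel γ c m n θ = -(γ * sin (m * θ)) / sin (n * θ + c) := if_neg hS

lemma levelExcess_eq {s θ : ℝ} (hS : sin (n * θ + c) ≠ 0) :
    levelExcess γ c m n s θ = (zeroLevel γ c m n θ - s) * sin (n * θ + c) ^ 2 := by
  rw [zeroLevel_of_sin_ne_zero hS, levelExcess, pencil]
  field_simp
  ring

lemma pencil_eq_zero_iff {s θ : ℝ} (hS : sin (n * θ + c) ≠ 0) :
    pencil γ c m n s θ = 0 ↔ zeroLevel γ c m n θ = s := by
  rw [zeroLevel_of_sin_ne_zero hS, div_eq_iff hS, pencil]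
  constructor <;> intro h <;> linarith

lemma zeroLevel_lt_of_levelExcess_neg {s θ : ℝ} (hS : sin (n * θ + c) ≠ 0)
    (h : levelExcess γ c m n s θ < 0) : zeroLevel γ c m n θ < s := by
  rw [levelExcess_eq hS] at h
  exact sub_neg.1 (neg_of_mul_neg_left h (sq_nonneg _))

lemma eventually_sin_ne_zero {θ : ℝ} (hS : sin (n * θ + c) ≠ 0) :
    ∀ᶠ x in 𝓝 θ, sin (n * x + c) ≠ 0 :=
  (hasDerivAt_sin_mul_add n c θ).continuousAt.eventually_ne hS

lemma continuousAt_zeroLevel {θ : ℝ} (hS : sin (n * θ + c) ≠ 0) :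
    ContinuousAt (zeroLevel γ c m n) θ := by
  have hcont : ContinuousAt (fun x => -(γ * sin (m * x)) / sin (n * x + c)) θ := by
    fun_prop (disch := exact hS)
  refine hcont.congr (Filter.EventuallyEq.symm ?_)
  filter_upwards [eventually_sin_ne_zero hS] with x hx
  exact zeroLevel_of_sin_ne_zero hx

lemma continuousOn_zeroLevel {a b : ℝ} (hS : ∀ x ∈ Icc a b, sin (n * x + c) ≠ 0) :
    ContinuousOn (zeroLevel γ c m n) (Icc a b) :=
  fun x hx => (continuousAt_zeroLevel (hS x hx)).continuousWithinAt

lemma eventually_zeroLevel_lt_of_pencilDeriv_eq_zero (hnm : n ^ 2 < m ^ 2) {v θ₀ : ℝ}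
    (hv : 0 < v) (hS : sin (n * θ₀ + c) ≠ 0) (hzero : pencil γ c m n v θ₀ = 0)
    (hcrit : pencilDeriv γ c m n v θ₀ = 0) : ∀ᶠ x in 𝓝[≠] θ₀, zeroLevel γ c m n x < v := by
  have hγ : γ * sin (m * θ₀) = -(v * sin (n * θ₀ + c)) := by
    rw [pencil] at hzero; linarith
  have hE'' : HasDerivAt (fun x => -pencilDeriv γ c m n v x * sin (n * x + c)
      - pencil γ c m n v x * (n * cos (n * x + c))) (-(v * (m ^ 2 - n ^ 2) *
        sin (n * θ₀ + c) ^ 2)) θ₀ := by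
    refine (((hasDerivAt_pencilDeriv γ c m n v θ₀).neg.mul (hasDerivAt_sin_mul_add n c θ₀)).sub
      ((hasDerivAt_pencil γ c m n v θ₀).mul ((hasDerivAt_cos_mul_add n c θ₀).const_mul n))
      ).congr_deriv ?_
    simp only [Pi.neg_apply, hzero, hcrit]
    linear_combination (m ^ 2 * sin (n * θ₀ + c)) * hγ
  have hneg : -(v * (m ^ 2 - n ^ 2) * sin (n * θ₀ + c) ^ 2) < 0 := by
    have := mul_pos (mul_pos hv (sub_pos.2 hnm)) (sq_pos_of_ne_zero hS)
    linarith
  have hlt := eventually_nhdsNE_lt_of_hasDerivAt_of_neg (hasDerivAt_levelExcess γ c m n v) hE''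
    (by rw [hzero, hcrit]; ring) hneg
  filter_upwards [hlt, (eventually_sin_ne_zero hS).filter_mono nhdsWithin_le_nhds] with x hx hSx
  refine zeroLevel_lt_of_levelExcess_neg hSx ?_
  simpa [levelExcess, hzero] using hx

lemma not_isLocalMin_zeroLevel (hnm : n ^ 2 < m ^ 2) {ξ : ℝ} (hS : sin (n * ξ + c) ≠ 0)
    (hpos : 0 < zeroLevel γ c m n ξ) : ¬ IsLocalMin (zeroLevel γ c m n) ξ := by
  intro hmin
  set v := zeroLevel γ c m n ξ
  have hzero : pencil γ c m n v ξ = 0 := (pencil_eq_zero_iff hS).2 rfl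
  have hexcess : IsLocalMin (levelExcess γ c m n v) ξ := by
    filter_upwards [hmin, eventually_sin_ne_zero hS] with x hx hSx
    rw [levelExcess_eq hSx, levelExcess, hzero, neg_zero, zero_mul]
    exact mul_nonneg (sub_nonneg.2 hx) (sq_nonneg _)
  have hcrit : pencilDeriv γ c m n v ξ = 0 := by
    have := hexcess.hasDerivAt_eq_zero (hasDerivAt_levelExcess γ c m n v ξ)
    rw [hzero] at this
    simpa [hS] using this
  obtain ⟨x, hlt, hle⟩ := ((eventually_zeroLevel_lt_of_pencilDeriv_eq_zero hnm hpos hS hzero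
    hcrit).and (hmin.filter_mono nhdsWithin_le_nhds)).exists
  exact hlt.not_ge hle

lemma eventually_nhdsLT_zeroLevel_lt (hnm : n ^ 2 < m ^ 2) {v θ : ℝ} (hv : 0 < v)
    (hS : sin (n * θ + c) ≠ 0) (hzero : pencil γ c m n v θ = 0)
    (hleft : pencilDeriv γ c m n v θ * sin (n * θ + c) ≤ 0) :
    ∀ᶠ x in 𝓝[<] θ, zeroLevel γ c m n x < v := by
  rcases hleft.lt_or_eq with hlt | heq
  · have hderiv := hasDerivAt_levelExcess γ c m n v θ
    rw [hzero] at hderiv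
    filter_upwards [hderiv.eventually_nhdsLT_lt_of_pos (by linarith),
      (eventually_sin_ne_zero hS).filter_mono nhdsWithin_le_nhds] with x hx hSx
    exact zeroLevel_lt_of_levelExcess_neg hSx (by simpa [levelExcess, hzero] using hx)
  · exact (eventually_zeroLevel_lt_of_pencilDeriv_eq_zero hnm hv hS hzero
      ((mul_eq_zero.1 heq).resolve_right hS)).filter_mono (nhdsLT_le_nhdsNE θ)

lemma eventually_nhdsGT_zeroLevel_lt (hnm : n ^ 2 < m ^ 2) {v θ : ℝ} (hv : 0 < v)
    (hS : sin (n * θ + c) ≠ 0) (hzero : pencil γ c m n v θ = 0)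
    (hright : 0 ≤ pencilDeriv γ c m n v θ * sin (n * θ + c)) :
    ∀ᶠ x in 𝓝[>] θ, zeroLevel γ c m n x < v := by
  rcases hright.lt_or_eq with hlt | heq
  · have hderiv := hasDerivAt_levelExcess γ c m n v θ
    rw [hzero] at hderiv
    filter_upwards [hderiv.eventually_nhdsGT_lt_of_neg (by linarith),
      (eventually_sin_ne_zero hS).filter_mono nhdsWithin_le_nhds] with x hx hSx
    exact zeroLevel_lt_of_levelExcess_neg hSx (by simpa [levelExcess, hzero] using hx)
  · exact (eventually_zeroLevel_lt_of_pencilDeriv_eq_zero hnm hv hS hzero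
      ((mul_eq_zero.1 heq.symm).resolve_right hS)).filter_mono (nhdsGT_le_nhdsNE θ)

lemma min_le_zeroLevel (hnm : n ^ 2 < m ^ 2) {a b : ℝ} (hab : a ≤ b)
    (hcont : ContinuousOn (zeroLevel γ c m n) (Icc a b))
    (hS : ∀ x ∈ Ioo a b, sin (n * x + c) ≠ 0) (hpos : ∀ x ∈ Ioo a b, 0 < zeroLevel γ c m n x) :
    ∀ x ∈ Icc a b, min (zeroLevel γ c m n a) (zeroLevel γ c m n b) ≤ zeroLevel γ c m n x :=
  min_le_of_forall_not_isLocalMin hab hcont fun ξ hξ =>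
    not_isLocalMin_zeroLevel hnm (hS ξ hξ) (hpos ξ hξ)

lemma zeroLevel_lt_of_left (hnm : n ^ 2 < m ^ 2) {b θ v : ℝ} (hbθ : b < θ)
    (hcont : ContinuousOn (zeroLevel γ c m n) (Icc b θ))
    (hS : ∀ x ∈ Ioc b θ, sin (n * x + c) ≠ 0) (hpos : ∀ x ∈ Icc b θ, 0 < zeroLevel γ c m n x)
    (hv : zeroLevel γ c m n θ = v) (hleft : pencilDeriv γ c m n v θ * sin (n * θ + c) ≤ 0) :
    zeroLevel γ c m n b < v := by
  by_contra! hle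
  have hSθ := hS θ ⟨hbθ, le_rfl⟩
  have hmin := min_le_zeroLevel hnm hbθ.le hcont (fun x hx => hS x (Ioo_subset_Ioc_self hx))
    (fun x hx => hpos x (Ioo_subset_Icc_self hx))
  obtain ⟨x, hlt, hx⟩ := ((eventually_nhdsLT_zeroLevel_lt hnm (hv ▸ hpos θ ⟨hbθ.le, le_rfl⟩) hSθ
    ((pencil_eq_zero_iff hSθ).2 hv) hleft).and (Ioo_mem_nhdsLT hbθ)).exists
  have := hmin x (Ioo_subset_Icc_self hx)
  rw [hv, min_eq_right hle] at this
  exact hlt.not_ge this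

lemma zeroLevel_lt_of_right (hnm : n ^ 2 < m ^ 2) {b θ v : ℝ} (hθb : θ < b)
    (hcont : ContinuousOn (zeroLevel γ c m n) (Icc θ b))
    (hS : ∀ x ∈ Ico θ b, sin (n * x + c) ≠ 0) (hpos : ∀ x ∈ Icc θ b, 0 < zeroLevel γ c m n x)
    (hv : zeroLevel γ c m n θ = v) (hright : 0 ≤ pencilDeriv γ c m n v θ * sin (n * θ + c)) :
    zeroLevel γ c m n b < v := by
  by_contra! hle
  have hSθ := hS θ ⟨le_rfl, hθb⟩
  have hmin := min_le_zeroLevel hnm hθb.le hcont (fun x hx => hS x (Ioo_subset_Ico_self hx))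
    (fun x hx => hpos x (Ioo_subset_Icc_self hx))
  obtain ⟨x, hlt, hx⟩ := ((eventually_nhdsGT_zeroLevel_lt hnm (hv ▸ hpos θ ⟨le_rfl, hθb.le⟩) hSθ
    ((pencil_eq_zero_iff hSθ).2 hv) hright).and (Ioo_mem_nhdsGT hθb)).exists
  have := hmin x (Ioo_subset_Icc_self hx)
  rw [hv, min_eq_left hle] at this
  exact hlt.not_ge this

lemma eventually_zeroLevel_lt_of_common_zero (hn : 0 < n) (hnm : n < m) {θs : ℝ}
    (hS : sin (n * θs + c) = 0) (hT : sin (m * θs) = 0) (hpos : 0 < zeroLevel γ c m n θs) :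
    ∀ᶠ x in 𝓝[≠] θs, zeroLevel γ c m n x < zeroLevel γ c m n θs := by
  have hm : 0 < m := hn.trans hnm
  have hψ : zeroLevel γ c m n θs = -(γ * m * cos (m * θs)) / (n * cos (n * θs + c)) := if_pos hS
  filter_upwards [self_mem_nhdsWithin,
    mem_nhdsWithin_of_mem_nhds (Metric.ball_mem_nhds θs (by positivity : 0 < π / m))]
    with x hx hball
  have hz : x - θs ≠ 0 := sub_ne_zero.2 hx
  have hP := sin_mul_sub_sin_pos hn hnm hz (by rwa [Metric.mem_ball, Real.dist_eq] at hball)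
  have hSz : sin (n * (x - θs)) ≠ 0 := left_ne_zero_of_mul hP.ne'
  have hSx : sin (n * x + c) = cos (n * θs + c) * sin (n * (x - θs)) := by
    rw [show n * x + c = n * (x - θs) + (n * θs + c) by ring, sin_add, hS]; ring
  have hTx : sin (m * x) = cos (m * θs) * sin (m * (x - θs)) := by
    rw [show m * x = m * (x - θs) + m * θs by ring, sin_add, hT]; ring
  have hc := cos_ne_zero_of_sin_eq_zero hS
  have hSx0 : sin (n * x + c) ≠ 0 := by rw [hSx]; exact mul_ne_zero hc hSz
  have hdiff : zeroLevel γ c m n θs - zeroLevel γ c m n x = zeroLevel γ c m n θs / m *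
      (sin (n * (x - θs)) * (m * sin (n * (x - θs)) - n * sin (m * (x - θs))) /
        sin (n * (x - θs)) ^ 2) := by
    rw [zeroLevel_of_sin_ne_zero hSx0, hSx, hTx, hψ]
    field_simp
    ring
  have : 0 < zeroLevel γ c m n θs - zeroLevel γ c m n x := by
    rw [hdiff]; have := sq_pos_of_ne_zero hSz; positivity
  linarith

lemma eventually_nhdsNE_sin_ne_zero (hn : n ≠ 0) {θs : ℝ} (hS : sin (n * θs + c) = 0) :
    ∀ᶠ x in 𝓝[≠] θs, sin (n * x + c) ≠ 0 := by
  have hslope := hasDerivAt_iff_tendsto_slope.1 (hasDerivAt_sin_mul_add n c θs)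
  filter_upwards [hslope.eventually_ne (mul_ne_zero hn (cos_ne_zero_of_sin_eq_zero hS))]
    with x hx hSx
  simp [slope_def_field, hS, hSx] at hx

lemma continuousAt_zeroLevel_of_common_zero (hn : n ≠ 0) {θs : ℝ}
    (hS : sin (n * θs + c) = 0) (hT : sin (m * θs) = 0) :
    ContinuousAt (zeroLevel γ c m n) θs := by
  have hslopeS := hasDerivAt_iff_tendsto_slope.1 (hasDerivAt_sin_mul_add n c θs)
  have hslopeT := hasDerivAt_iff_tendsto_slope.1
    ((hasDerivAt_sin_mul_add m 0 θs).const_mul γ)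
  simp only [add_zero] at hslopeT
  have hlim := hslopeT.neg.div hslopeS (mul_ne_zero hn (cos_ne_zero_of_sin_eq_zero hS))
  rw [continuousAt_iff_punctured_nhds, zeroLevel, if_pos hS]
  refine (hlim.congr' ?_).trans (by rw [mul_assoc])
  filter_upwards [eventually_nhdsNE_sin_ne_zero hn hS, self_mem_nhdsWithin] with x hSx hx
  have hx' : x - θs ≠ 0 := sub_ne_zero.2 hx
  rw [zeroLevel_of_sin_ne_zero hSx]
  simp only [Pi.div_apply, slope_def_field, hS, hT, mul_zero, sub_zero]
  field_simp

lemma tendsto_zeroLevel_nhdsGT (hn : n ≠ 0) {θs : ℝ} (hS : sin (n * θs + c) = 0)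
    (hT : γ * sin (m * θs) ≠ 0) :
    Tendsto (zeroLevel γ c m n) (𝓝[>] θs) atTop ∨ Tendsto (zeroLevel γ c m n) (𝓝[>] θs) atBot := by
  have hS' : n * cos (n * θs + c) ≠ 0 := mul_ne_zero hn (cos_ne_zero_of_sin_eq_zero hS)
  have hslope := (hasDerivAt_iff_tendsto_slope.1 (hasDerivAt_sin_mul_add n c θs)).mono_left
    (nhdsGT_le_nhdsNE θs)
  have hnum : Tendsto (fun x => -(γ * sin (m * x))) (𝓝[>] θs) (𝓝 (-(γ * sin (m * θs)))) :=
    ((continuous_const.mul (continuous_sin.comp (continuous_const.mul continuous_id))).neg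
      ).continuousWithinAt
  have hlim := hnum.div hslope hS'
  have hsub : Tendsto (fun x => x - θs) (𝓝[>] θs) (𝓝[>] 0) := by
    refine tendsto_nhdsWithin_of_tendsto_nhds_of_eventually_within _
      (((continuous_sub_right θs).tendsto' θs 0 (sub_self θs)).mono_left nhdsWithin_le_nhds) ?_
    filter_upwards [self_mem_nhdsWithin] with x (hx : θs < x) using sub_pos.2 hx
  have hinv := tendsto_inv_nhdsGT_zero.comp hsub
  have heq : (fun x => -(γ * sin (m * x)) / slope (fun x => sin (n * x + c)) θs x * (x - θs)⁻¹)
      =ᶠ[𝓝[>] θs] zeroLevel γ c m n := by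
    filter_upwards [(eventually_nhdsNE_sin_ne_zero hn hS).filter_mono (nhdsGT_le_nhdsNE θs),
      self_mem_nhdsWithin] with x hSx hx
    have hx' : x - θs ≠ 0 := sub_ne_zero.2 hx.ne'
    rw [zeroLevel_of_sin_ne_zero hSx, slope_def_field, hS, sub_zero]
    field_simp
  rcases lt_or_gt_of_ne (div_ne_zero (neg_ne_zero.2 hT) hS') with hneg | hpos
  · exact Or.inr ((hlim.neg_mul_atTop hneg hinv).congr' heq)
  · exact Or.inl ((hlim.pos_mul_atTop hpos hinv).congr' heq)

section LeftSearch

variable (hn : 0 < n) (hnm : n < m) {a θ s₁ s₂ : ℝ} (ha : sin (n * a + c) = 0) (haθ : a < θ)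
  (hS : ∀ x ∈ Ioc a θ, sin (n * x + c) ≠ 0) (hs₁ : 0 < s₁) (hθ : zeroLevel γ c m n θ = s₂)
  (hleft : pencilDeriv γ c m n s₂ θ * sin (n * θ + c) ≤ 0)
include hn hnm ha haθ hS hs₁ hθ hleft

lemma exists_zeroLevel_le_of_common_zero (hT : sin (m * a) = 0) :
    ∃ x ∈ Ioc a θ, zeroLevel γ c m n x ≤ s₁ := by
  by_contra! hgt
  have hnm2 : n ^ 2 < m ^ 2 := by nlinarith
  have hca := continuousAt_zeroLevel_of_common_zero hn.ne' (γ := γ) ha hT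
  have hcont : ContinuousOn (zeroLevel γ c m n) (Icc a θ) := fun x hx => by
    rcases hx.1.eq_or_lt with rfl | h
    exacts [hca.continuousWithinAt, (continuousAt_zeroLevel (hS x ⟨h, hx.2⟩)).continuousWithinAt]
  have hright : ∀ᶠ x in 𝓝[>] a, x ∈ Ioo a θ := Ioo_mem_nhdsGT haθ
  have hLa : s₁ ≤ zeroLevel γ c m n a := ge_of_tendsto (hca.tendsto.mono_left nhdsWithin_le_nhds)
    (hright.mono fun x hx => (hgt x ⟨hx.1, hx.2.le⟩).le)
  have hpos : ∀ x ∈ Icc a θ, 0 < zeroLevel γ c m n x := fun x hx => by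
    rcases hx.1.eq_or_lt with rfl | h
    exacts [hs₁.trans_le hLa, hs₁.trans (hgt x ⟨h, hx.2⟩)]
  have hlt := zeroLevel_lt_of_left hnm2 haθ hcont hS hpos hθ hleft
  have hmin := min_le_zeroLevel hnm2 haθ.le hcont (fun x hx => hS x (Ioo_subset_Ioc_self hx))
    (fun x hx => hpos x (Ioo_subset_Icc_self hx))
  obtain ⟨x, hx, hxI⟩ := (((eventually_zeroLevel_lt_of_common_zero hn hnm ha hT
    (hpos a ⟨le_rfl, haθ.le⟩)).filter_mono (nhdsGT_le_nhdsNE a)).and hright).exists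
  have := hmin x (Ioo_subset_Icc_self hxI)
  rw [hθ, min_eq_left hlt.le] at this
  linarith

lemma exists_zeroLevel_le_of_pole (hT : γ * sin (m * a) ≠ 0) :
    ∃ x ∈ Ioc a θ, zeroLevel γ c m n x ≤ s₁ := by
  by_contra! hgt
  have hright : ∀ᶠ x in 𝓝[>] a, x ∈ Ioo a θ := Ioo_mem_nhdsGT haθ
  rcases tendsto_zeroLevel_nhdsGT hn.ne' ha hT with htop | hbot
  · obtain ⟨b, hb, hbI⟩ := ((htop.eventually_gt_atTop s₂).and hright).exists
    have := zeroLevel_lt_of_left (by nlinarith) hbI.2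
      (continuousOn_zeroLevel fun x hx => hS x ⟨hbI.1.trans_le hx.1, hx.2⟩)
      (fun x hx => hS x ⟨hbI.1.trans hx.1, hx.2⟩)
      (fun x hx => hs₁.trans (hgt x ⟨hbI.1.trans_le hx.1, hx.2⟩)) hθ hleft
    linarith
  · obtain ⟨b, hb, hbI⟩ := ((hbot.eventually_lt_atBot s₁).and hright).exists
    linarith [hgt b ⟨hbI.1, hbI.2.le⟩]

lemma exists_zeroLevel_eq_left (hs₁₂ : s₁ < s₂) :
    ∃ φ ∈ Ioo a θ, zeroLevel γ c m n φ = s₁ := by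
  have hγ : γ ≠ 0 := by
    rintro rfl
    rw [zeroLevel_of_sin_ne_zero (hS θ ⟨haθ, le_rfl⟩)] at hθ
    linarith [show (0 : ℝ) = s₂ by simpa using hθ]
  obtain ⟨x, hx, hxs₁⟩ : ∃ x ∈ Ioc a θ, zeroLevel γ c m n x ≤ s₁ := by
    rcases eq_or_ne (sin (m * a)) 0 with hT | hT
    · exact exists_zeroLevel_le_of_common_zero hn hnm ha haθ hS hs₁ hθ hleft hT
    · exact exists_zeroLevel_le_of_pole hn hnm ha haθ hS hs₁ hθ hleft (mul_ne_zero hγ hT)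
  obtain ⟨φ, hφ, hφs₁⟩ := isPreconnected_Icc.intermediate_value (left_mem_Icc.2 hx.2)
    (right_mem_Icc.2 hx.2)
    (continuousOn_zeroLevel fun y hy => hS y ⟨hx.1.trans_le hy.1, hy.2⟩)
    ⟨hxs₁, hθ ▸ hs₁₂.le⟩
  refine ⟨φ, ⟨hx.1.trans_le hφ.1, hφ.2.lt_of_ne ?_⟩, hφs₁⟩
  rintro rfl
  exact hs₁₂.ne' (hθ ▸ hφs₁)

end LeftSearch

lemma sin_mul_neg_add_neg (n c x : ℝ) : sin (n * -x + -c) = -sin (n * x + c) := by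
  rw [← sin_neg]; ring_nf

lemma zeroLevel_neg (γ c m n x : ℝ) : zeroLevel γ (-c) m n (-x) = zeroLevel γ c m n x := by
  have hcos : cos (n * -x + -c) = cos (n * x + c) := by rw [← cos_neg]; ring_nf
  simp only [zeroLevel, sin_mul_neg_add_neg, neg_eq_zero, hcos,
    show m * -x = -(m * x) by ring, sin_neg, cos_neg]
  split_ifs <;> ring

lemma pencilDeriv_neg (γ c m n s x : ℝ) :
    pencilDeriv γ (-c) m n s (-x) = pencilDeriv γ c m n s x := by
  have hcos : cos (n * -x + -c) = cos (n * x + c) := by rw [← cos_neg]; ring_nf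
  simp only [pencilDeriv, hcos, show m * -x = -(m * x) by ring, cos_neg]

lemma exists_zeroLevel_eq_right (hn : 0 < n) (hnm : n < m) {b θ s₁ s₂ : ℝ}
    (hb : sin (n * b + c) = 0) (hθb : θ < b) (hS : ∀ x ∈ Ico θ b, sin (n * x + c) ≠ 0)
    (hs₁ : 0 < s₁) (hs₁₂ : s₁ < s₂) (hθ : zeroLevel γ c m n θ = s₂)
    (hright : 0 ≤ pencilDeriv γ c m n s₂ θ * sin (n * θ + c)) :
    ∃ φ ∈ Ioo θ b, zeroLevel γ c m n φ = s₁ := by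
  obtain ⟨φ, hφ, hφs₁⟩ := exists_zeroLevel_eq_left (γ := γ) (c := -c) hn hnm
    (by rw [sin_mul_neg_add_neg, hb, neg_zero]) (neg_lt_neg hθb)
    (fun x hx => by
      rw [← neg_neg x, sin_mul_neg_add_neg, neg_ne_zero]
      exact hS (-x) ⟨le_neg.1 hx.2, neg_lt.1 hx.1⟩)
    hs₁ (by rwa [zeroLevel_neg]) (by rw [pencilDeriv_neg, sin_mul_neg_add_neg]; linarith) hs₁₂
  refine ⟨-φ, ⟨lt_neg.1 hφ.2, neg_lt.1 hφ.1⟩, ?_⟩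
  rwa [← zeroLevel_neg, neg_neg]

section Window

variable (hn : 0 < n)
include hn

lemma mul_windowStart_add (θ : ℝ) : n * windowStart c n θ + c = ⌊(n * θ + c) / π⌋ * π := by
  rw [windowStart]; field_simp; ring

lemma mul_windowEnd_add (θ : ℝ) : n * windowEnd c n θ + c = (⌊(n * θ + c) / π⌋ + 1) * π := by
  rw [windowEnd, mul_add, add_right_comm, mul_windowStart_add hn]; field_simp

lemma sin_windowStart (θ : ℝ) : sin (n * windowStart c n θ + c) = 0 := by
  rw [mul_windowStart_add hn]; exact sin_int_mul_pi _

lemma sin_windowEnd (θ : ℝ) : sin (n * windowEnd c n θ + c) = 0 := by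
  rw [mul_windowEnd_add hn]; exact_mod_cast sin_int_mul_pi (⌊(n * θ + c) / π⌋ + 1)

lemma windowStart_le (θ : ℝ) : windowStart c n θ ≤ θ := by
  have h := mul_windowStart_add hn (c := c) θ
  have := (le_div_iff₀ pi_pos).1 (Int.floor_le ((n * θ + c) / π))
  nlinarith

lemma lt_windowEnd (θ : ℝ) : θ < windowEnd c n θ := by
  have h := mul_windowEnd_add hn (c := c) θ
  have := (div_lt_iff₀ pi_pos).1 (Int.lt_floor_add_one ((n * θ + c) / π))
  nlinarith

lemma sin_ne_zero_of_mem_window {θ x : ℝ} (hx : x ∈ Ioo (windowStart c n θ) (windowEnd c n θ)) :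
    sin (n * x + c) ≠ 0 := by
  have h₁ := mul_windowStart_add hn (c := c) θ
  have h₂ := mul_windowEnd_add hn (c := c) θ
  have hlo : ⌊(n * θ + c) / π⌋ * π < n * x + c := by nlinarith [hx.1]
  have hhi : n * x + c < (⌊(n * θ + c) / π⌋ + 1) * π := by nlinarith [hx.2]
  rw [← sub_add_cancel (n * x + c) (⌊(n * θ + c) / π⌋ * π), sin_add_int_mul_pi]
  exact mul_ne_zero (zpow_ne_zero _ (by norm_num))
    (sin_pos_of_pos_of_lt_pi (by linarith) (by linarith)).ne'

lemma le_windowStart {θ z : ℝ} (hz : sin (n * z + c) = 0) (hzθ : z ≤ θ) :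
    z ≤ windowStart c n θ :=
  not_lt.1 fun h => sin_ne_zero_of_mem_window hn ⟨h, hzθ.trans_lt (lt_windowEnd hn θ)⟩ hz

lemma windowEnd_le {θ z : ℝ} (hz : sin (n * z + c) = 0) (hθz : θ < z) :
    windowEnd c n θ ≤ z :=
  not_lt.1 fun h => sin_ne_zero_of_mem_window hn ⟨(windowStart_le hn θ).trans_lt hθz, h⟩ hz

lemma windowStart_lt {θ : ℝ} (hS : sin (n * θ + c) ≠ 0) : windowStart c n θ < θ :=
  (windowStart_le hn θ).lt_of_ne fun h => hS (h ▸ sin_windowStart hn θ)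

end Window

section Match

variable (hn : 0 < n) (hnm : n < m) {s₁ s₂ θ : ℝ} (hs₁ : 0 < s₁) (hs₁₂ : s₁ < s₂)
include hn hnm hs₁ hs₁₂

lemma isGreatest_matchPoint (hS : sin (n * θ + c) ≠ 0) (hθ : zeroLevel γ c m n θ = s₂)
    (hleft : pencilDeriv γ c m n s₂ θ * sin (n * θ + c) ≤ 0) :
    IsGreatest {x ∈ Ioc (windowStart c n θ) θ | zeroLevel γ c m n x = s₁}
      (matchPoint γ c m n s₁ s₂ θ) := by
  have hwin : ∀ x ∈ Ioc (windowStart c n θ) θ, sin (n * x + c) ≠ 0 := fun x hx =>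
    sin_ne_zero_of_mem_window hn ⟨hx.1, hx.2.trans_lt (lt_windowEnd hn θ)⟩
  obtain ⟨x₁, hx₁, hψx₁⟩ := exists_zeroLevel_eq_left hn hnm (sin_windowStart hn θ)
    (windowStart_lt hn hS) hwin hs₁ hθ hleft hs₁₂
  obtain ⟨φ, hφ⟩ := exists_isGreatest_Ioc_eq (fun x hx => continuousAt_zeroLevel (hwin x hx))
    (Ioo_subset_Ioc_self hx₁) hψx₁
  rwa [matchPoint, if_neg hS, if_pos hleft, hφ.csSup_eq]

lemma isLeast_matchPoint (hS : sin (n * θ + c) ≠ 0) (hθ : zeroLevel γ c m n θ = s₂)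
    (hright : 0 < pencilDeriv γ c m n s₂ θ * sin (n * θ + c)) :
    IsLeast {x ∈ Ico θ (windowEnd c n θ) | zeroLevel γ c m n x = s₁}
      (matchPoint γ c m n s₁ s₂ θ) := by
  have hwin : ∀ x ∈ Ico θ (windowEnd c n θ), sin (n * x + c) ≠ 0 := fun x hx =>
    sin_ne_zero_of_mem_window hn ⟨(windowStart_lt hn hS).trans_le hx.1, hx.2⟩
  obtain ⟨x₁, hx₁, hψx₁⟩ := exists_zeroLevel_eq_right hn hnm (sin_windowEnd hn θ)
    (lt_windowEnd hn θ) hwin hs₁ hs₁₂ hθ hright.le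
  obtain ⟨φ, hφ⟩ := exists_isLeast_Ico_eq (fun x hx => continuousAt_zeroLevel (hwin x hx))
    (Ioo_subset_Ico_self hx₁) hψx₁
  rwa [matchPoint, if_neg hS, if_neg hright.not_ge, hφ.csInf_eq]

lemma matchPoint_mem_window (hS : sin (n * θ + c) ≠ 0) (hθ : zeroLevel γ c m n θ = s₂) :
    matchPoint γ c m n s₁ s₂ θ ∈ Ioo (windowStart c n θ) (windowEnd c n θ) ∧
      zeroLevel γ c m n (matchPoint γ c m n s₁ s₂ θ) = s₁ := by
  rcases le_or_gt (pencilDeriv γ c m n s₂ θ * sin (n * θ + c)) 0 with hleft | hright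
  · obtain ⟨⟨hmem, hψ⟩, -⟩ := isGreatest_matchPoint hn hnm hs₁ hs₁₂ hS hθ hleft
    exact ⟨⟨hmem.1, hmem.2.trans_lt (lt_windowEnd hn θ)⟩, hψ⟩
  · obtain ⟨⟨hmem, hψ⟩, -⟩ := isLeast_matchPoint hn hnm hs₁ hs₁₂ hS hθ hright
    exact ⟨⟨(windowStart_lt hn hS).trans_le hmem.1, hmem.2⟩, hψ⟩

lemma pencil_matchPoint (hθ : pencil γ c m n s₂ θ = 0) :
    pencil γ c m n s₁ (matchPoint γ c m n s₁ s₂ θ) = 0 := by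
  by_cases hS : sin (n * θ + c) = 0
  · rw [matchPoint, if_pos hS]
    simpa [pencil, hS] using hθ
  · obtain ⟨hmem, hψ⟩ := matchPoint_mem_window hn hnm hs₁ hs₁₂ hS ((pencil_eq_zero_iff hS).1 hθ)
    exact (pencil_eq_zero_iff (sin_ne_zero_of_mem_window hn hmem)).2 hψ

variable {θ' : ℝ} (hθθ' : θ < θ') (hS : ∀ x ∈ Icc θ θ', sin (n * x + c) ≠ 0)
  (hθ : zeroLevel γ c m n θ = s₂) (hθ' : zeroLevel γ c m n θ' = s₂)
include hθθ' hS hθ hθ'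

lemma matchPoint_ne_of_left_left
    (hleft : pencilDeriv γ c m n s₂ θ * sin (n * θ + c) ≤ 0)
    (hleft' : pencilDeriv γ c m n s₂ θ' * sin (n * θ' + c) ≤ 0) :
    matchPoint γ c m n s₁ s₂ θ ≠ matchPoint γ c m n s₁ s₂ θ' := by
  intro heq
  have hmax := isGreatest_matchPoint hn hnm hs₁ hs₁₂ (hS θ' ⟨hθθ'.le, le_rfl⟩) hθ' hleft'
  have hle : matchPoint γ c m n s₁ s₂ θ ≤ θ :=
    (isGreatest_matchPoint hn hnm hs₁ hs₁₂ (hS θ ⟨le_rfl, hθθ'.le⟩) hθ hleft).1.1.2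
  have hstart : windowStart c n θ' < θ := not_le.1 fun h =>
    hS _ ⟨h, windowStart_le hn θ'⟩ (sin_windowStart hn θ')
  have hgt : ∀ x ∈ Icc θ θ', s₁ < zeroLevel γ c m n x :=
    forall_lt_of_forall_ne_of_continuousOn (continuousOn_zeroLevel hS) ⟨le_rfl, hθθ'.le⟩
      (hθ ▸ hs₁₂) fun x hx hψ => by
        have := heq ▸ hmax.2 ⟨⟨hstart.trans_le hx.1, hx.2⟩, hψ⟩
        rw [le_antisymm (this.trans hle) hx.1, hθ] at hψ
        exact hs₁₂.ne' hψ
  have := zeroLevel_lt_of_left (by nlinarith) hθθ' (continuousOn_zeroLevel hS)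
    (fun x hx => hS x (Ioc_subset_Icc_self hx)) (fun x hx => hs₁.trans (hgt x hx)) hθ' hleft'
  exact this.ne hθ

lemma matchPoint_ne_of_right_right
    (hright : 0 < pencilDeriv γ c m n s₂ θ * sin (n * θ + c))
    (hright' : 0 < pencilDeriv γ c m n s₂ θ' * sin (n * θ' + c)) :
    matchPoint γ c m n s₁ s₂ θ ≠ matchPoint γ c m n s₁ s₂ θ' := by
  intro heq
  have hmin := isLeast_matchPoint hn hnm hs₁ hs₁₂ (hS θ ⟨le_rfl, hθθ'.le⟩) hθ hright
  have hge : θ' ≤ matchPoint γ c m n s₁ s₂ θ' :=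
    (isLeast_matchPoint hn hnm hs₁ hs₁₂ (hS θ' ⟨hθθ'.le, le_rfl⟩) hθ' hright').1.1.1
  have hend : θ' < windowEnd c n θ := not_le.1 fun h =>
    hS _ ⟨(lt_windowEnd hn θ).le, h⟩ (sin_windowEnd hn θ)
  have hgt : ∀ x ∈ Icc θ θ', s₁ < zeroLevel γ c m n x :=
    forall_lt_of_forall_ne_of_continuousOn (continuousOn_zeroLevel hS) ⟨hθθ'.le, le_rfl⟩
      (hθ' ▸ hs₁₂) fun x hx hψ => by
        have := heq ▸ hmin.2 ⟨⟨hx.1, hx.2.trans_lt hend⟩, hψ⟩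
        rw [le_antisymm hx.2 (hge.trans this), hθ'] at hψ
        exact hs₁₂.ne' hψ
  have := zeroLevel_lt_of_right (by nlinarith) hθθ' (continuousOn_zeroLevel hS)
    (fun x hx => hS x (Ico_subset_Icc_self hx)) (fun x hx => hs₁.trans (hgt x hx)) hθ hright.le
  exact this.ne hθ'

lemma matchPoint_ne_of_right_left
    (hright : 0 < pencilDeriv γ c m n s₂ θ * sin (n * θ + c))
    (hleft' : pencilDeriv γ c m n s₂ θ' * sin (n * θ' + c) ≤ 0) :
    matchPoint γ c m n s₁ s₂ θ ≠ matchPoint γ c m n s₁ s₂ θ' := by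
  intro heq
  set φ := matchPoint γ c m n s₁ s₂ θ
  have hmin := isLeast_matchPoint hn hnm hs₁ hs₁₂ (hS θ ⟨le_rfl, hθθ'.le⟩) hθ hright
  have hmax := isGreatest_matchPoint hn hnm hs₁ hs₁₂ (hS θ' ⟨hθθ'.le, le_rfl⟩) hθ' hleft'
  rw [← heq] at hmax
  have hφ : zeroLevel γ c m n φ = s₁ := hmin.1.2
  have hθφ : θ < φ := hmin.1.1.1.lt_of_ne fun h => hs₁₂.ne' (by rw [← hθ, h, hφ])
  have hφθ' : φ < θ' := hmax.1.1.2.lt_of_ne fun h => hs₁₂.ne' (by rw [← hθ', ← h, hφ])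
  have hlocal : ∀ x ∈ Icc θ θ', s₁ ≤ zeroLevel γ c m n x := fun x hx => by
    rcases lt_trichotomy x φ with hx' | rfl | hx'
    · refine (forall_lt_of_forall_ne_of_continuousOn (continuousOn_zeroLevel fun y hy =>
        hS y ⟨hy.1, hy.2.trans (hx'.trans hφθ').le⟩) ⟨le_rfl, hx.1⟩ (hθ ▸ hs₁₂)
        (fun y hy hψ => (hmin.2 ⟨⟨hy.1, ?_⟩, hψ⟩).not_gt (hy.2.trans_lt hx'))
        x ⟨hx.1, le_rfl⟩).le
      exact hy.2.trans_lt (hx'.trans hmin.1.1.2)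
    · exact hφ.ge
    · refine (forall_lt_of_forall_ne_of_continuousOn (continuousOn_zeroLevel fun y hy =>
        hS y ⟨(hθφ.trans hx').le.trans hy.1, hy.2⟩) ⟨hx.2, le_rfl⟩ (hθ' ▸ hs₁₂)
        (fun y hy hψ => (hmax.2 ⟨⟨?_, hy.2⟩, hψ⟩).not_gt (hx'.trans_le hy.1))
        x ⟨le_rfl, hx.2⟩).le
      exact (hmax.1.1.1.trans hx').trans_le hy.1
  refine not_isLocalMin_zeroLevel (by nlinarith) (hS φ ⟨hθφ.le, hφθ'.le⟩) (hφ ▸ hs₁) ?_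
  filter_upwards [Icc_mem_nhds hθφ hφθ'] with x hx
  exact hφ ▸ hlocal x hx

end Match

lemma sin_matchPoint_eq_zero_iff (hn : 0 < n) (hnm : n < m) {s₁ s₂ θ : ℝ} (hs₁ : 0 < s₁)
    (hs₁₂ : s₁ < s₂) (hθ : pencil γ c m n s₂ θ = 0) :
    sin (n * matchPoint γ c m n s₁ s₂ θ + c) = 0 ↔ sin (n * θ + c) = 0 := by
  by_cases hS : sin (n * θ + c) = 0
  · rw [matchPoint, if_pos hS]
  · exact iff_of_false (sin_ne_zero_of_mem_window hn (matchPoint_mem_window hn hnm hs₁ hs₁₂ hS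
      ((pencil_eq_zero_iff hS).1 hθ)).1) hS

lemma injOn_matchPoint (hn : 0 < n) (hnm : n < m) {s₁ s₂ : ℝ} (hs₁ : 0 < s₁) (hs₁₂ : s₁ < s₂) :
    InjOn (matchPoint γ c m n s₁ s₂) {θ | pencil γ c m n s₂ θ = 0} := by
  intro θ hθ θ' hθ' heq
  by_contra hne
  wlog hlt : θ < θ' generalizing θ θ'
  · exact this hθ' hθ heq.symm (Ne.symm hne) ((not_lt.1 hlt).lt_of_ne (Ne.symm hne))
  by_cases hS : sin (n * θ + c) = 0
  · have hS' : sin (n * θ' + c) = 0 := by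
      rwa [← sin_matchPoint_eq_zero_iff hn hnm hs₁ hs₁₂ hθ', ← heq,
        sin_matchPoint_eq_zero_iff hn hnm hs₁ hs₁₂ hθ]
    rw [matchPoint, if_pos hS, matchPoint, if_pos hS'] at heq
    exact hne heq
  have hS' : sin (n * θ' + c) ≠ 0 := by
    rwa [Ne, ← sin_matchPoint_eq_zero_iff hn hnm hs₁ hs₁₂ hθ', ← heq,
      sin_matchPoint_eq_zero_iff hn hnm hs₁ hs₁₂ hθ]
  have hψ := (pencil_eq_zero_iff hS).1 hθ
  have hψ' := (pencil_eq_zero_iff hS').1 hθ'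
  have hmem := (matchPoint_mem_window hn hnm hs₁ hs₁₂ hS hψ).1
  have hmem' := (matchPoint_mem_window hn hnm hs₁ hs₁₂ hS' hψ').1
  -- no zero of `sin (n x + c)` separates `θ` from `θ'`, as `matchPoint` lies in both windows
  have hwin : ∀ x ∈ Icc θ θ', sin (n * x + c) ≠ 0 := fun x hx hx0 => by
    have hθx : θ < x := hx.1.lt_of_ne (by rintro rfl; exact hS hx0)
    linarith [windowEnd_le hn hx0 hθx, le_windowStart hn hx0 hx.2, hmem.2, hmem'.1]
  rcases le_or_gt (pencilDeriv γ c m n s₂ θ * sin (n * θ + c)) 0 with hL | hR <;>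
    rcases le_or_gt (pencilDeriv γ c m n s₂ θ' * sin (n * θ' + c)) 0 with hL' | hR'
  · exact matchPoint_ne_of_left_left hn hnm hs₁ hs₁₂ hlt hwin hψ hψ' hL hL' heq
  · linarith [(isGreatest_matchPoint hn hnm hs₁ hs₁₂ hS hψ hL).1.1.2,
      (isLeast_matchPoint hn hnm hs₁ hs₁₂ hS' hψ' hR').1.1.1]
  · exact matchPoint_ne_of_right_left hn hnm hs₁ hs₁₂ hlt hwin hψ hψ' hR hL' heq
  · exact matchPoint_ne_of_right_right hn hnm hs₁ hs₁₂ hlt hwin hψ hψ' hR hR' heq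

lemma exists_pencil_ne_zero (hn : n ≠ 0) (hnm : n ^ 2 ≠ m ^ 2) {s : ℝ} (hs : s ≠ 0) :
    ∃ θ, pencil γ c m n s θ ≠ 0 := by
  by_contra! h
  have h₀ : pencil γ c m n s = fun _ => 0 := funext h
  have h₁ : pencilDeriv γ c m n s = fun _ => 0 := funext fun θ =>
    (hasDerivAt_pencil γ c m n s θ).unique (h₀ ▸ hasDerivAt_const θ 0)
  obtain ⟨θ₁, hθ₁⟩ : ∃ θ₁, n * θ₁ + c = π / 2 :=
    ⟨(π / 2 - c) / n, by rw [mul_div_cancel₀ _ hn, sub_add_cancel]⟩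
  have hS : sin (n * θ₁ + c) = 1 := by rw [hθ₁, sin_pi_div_two]
  have h₃ := (hasDerivAt_pencilDeriv γ c m n s θ₁).unique (h₁ ▸ hasDerivAt_const θ₁ 0)
  have h₄ := h θ₁
  rw [pencil, hS] at h₄
  rw [hS] at h₃
  have : s * (m ^ 2 - n ^ 2) = 0 := by linear_combination h₃ + m ^ 2 * h₄
  exact hs ((mul_eq_zero.1 this).resolve_right (sub_ne_zero.2 hnm.symm))

lemma finite_pencil_zeros (hn : n ≠ 0) (hnm : n ^ 2 ≠ m ^ 2) {s : ℝ} (hs : s ≠ 0) {K : Set ℝ}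
    (hK : IsCompact K) : {θ ∈ K | pencil γ c m n s θ = 0}.Finite := by
  obtain ⟨θ₀, hθ₀⟩ := exists_pencil_ne_zero (γ := γ) (c := c) hn hnm hs
  have hana : AnalyticOnNhd ℝ (pencil γ c m n s) univ := fun x _ => by unfold pencil; fun_prop
  refine (hK.finite_sdiff_of_mem_codiscreteWithin (codiscreteWithin_mono (subset_univ K)
    (hana.preimage_zero_mem_codiscrete hθ₀))).subset fun x hx => ⟨hx.1, by simpa using hx.2⟩

lemma pencil_add_two_pi {b d : ℤ} (hb : (b : ℝ) = 2 * n) (hd : (d : ℝ) = m - n) (s θ : ℝ) :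
    pencil γ c m n s (θ + 2 * π) = (-1) ^ b * pencil γ c m n s θ := by
  have h₁ : n * (θ + 2 * π) + c = n * θ + c + b * π := by rw [hb]; ring
  have h₂ : m * (θ + 2 * π) = m * θ + d * (2 * π) + b * π := by rw [hb, hd]; ring
  rw [pencil, pencil, h₁, h₂, sin_add_int_mul_pi, sin_add_int_mul_pi, sin_add_int_mul_two_pi]
  ring

theorem ncard_pencil_zeros_le (hn : 0 < n) (hnm : n < m) {b d : ℤ} (hb : (b : ℝ) = 2 * n)
    (hd : (d : ℝ) = m - n) {s₁ s₂ : ℝ} (hs₁ : 0 < s₁) (hs₁₂ : s₁ ≤ s₂) :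
    {θ ∈ Ico 0 (2 * π) | pencil γ c m n s₂ θ = 0}.ncard ≤
      {θ ∈ Ico 0 (2 * π) | pencil γ c m n s₁ θ = 0}.ncard := by
  rcases hs₁₂.eq_or_lt with rfl | hlt
  · rfl
  set x₀ := -c / n
  have hx₀ : sin (n * x₀ + c) = 0 := by simp [x₀, mul_div_cancel₀ _ hn.ne']
  have hx₀' : sin (n * (x₀ + 2 * π) + c) = 0 := by
    rw [show n * (x₀ + 2 * π) + c = n * x₀ + c + b * π by rw [hb]; ring, sin_add_int_mul_pi, hx₀,
      mul_zero]
  have hshift : ∀ s, {θ ∈ Ico 0 (2 * π) | pencil γ c m n s θ = 0}.ncard =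
      {θ ∈ Ico x₀ (x₀ + 2 * π) | pencil γ c m n s θ = 0}.ncard := fun s => by
    have hsign : ((-1 : ℝ) ^ b) ≠ 0 := zpow_ne_zero _ (by norm_num)
    simpa using ncard_sep_Ico_eq_of_periodic two_pi_pos
      (fun θ => by simp [pencil_add_two_pi hb hd, hsign]) 0 x₀
  rw [hshift, hshift]
  refine ncard_le_ncard_of_injOn (matchPoint γ c m n s₁ s₂) (fun θ ⟨hθI, hθ⟩ => ?_)
    ((injOn_matchPoint hn hnm hs₁ hlt).mono fun θ hθ => hθ.2)
    ((finite_pencil_zeros hn.ne' (by nlinarith) hs₁.ne' isCompact_Icc).subset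
      fun θ ⟨hθI, hθ⟩ => ⟨Ico_subset_Icc_self hθI, hθ⟩)
  refine ⟨?_, pencil_matchPoint hn hnm hs₁ hlt hθ⟩
  by_cases hS : sin (n * θ + c) = 0
  · rwa [matchPoint, if_pos hS]
  · have hmem := (matchPoint_mem_window hn hnm hs₁ hlt hS ((pencil_eq_zero_iff hS).1 hθ)).1
    exact ⟨(le_windowStart hn hx₀ hθI.1).trans hmem.1.le,
      hmem.2.trans_le (windowEnd_le hn hx₀' hθI.2)⟩

end

end TrigPencil

lemma exponents_pos_lt_and_integral {p q r : ℕ} {m n : ℝ} (hq : 2 ≤ q) (hpq : q < p)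
    (hr : r = Nat.gcd (p - 1) (q - 1))
    (hm : m = ((p : ℝ) - 1) * ((q : ℝ) + 1) / (2 * r))
    (hn : n = ((p : ℝ) + 1) * ((q : ℝ) - 1) / (2 * r)) :
    0 < n ∧ n < m ∧ (∃ b : ℤ, (b : ℝ) = 2 * n) ∧ ∃ d : ℤ, (d : ℝ) = m - n := by
  have hr0 : 0 < r := hr ▸ Nat.gcd_pos_of_pos_right _ (by omega)
  obtain ⟨j, hj⟩ : r ∣ p - 1 := hr ▸ Nat.gcd_dvd_left _ _
  obtain ⟨k, hk⟩ : r ∣ q - 1 := hr ▸ Nat.gcd_dvd_right _ _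
  have hp : (p : ℝ) = r * j + 1 := by exact_mod_cast Nat.eq_add_of_sub_eq (by omega) hj
  have hq' : (q : ℝ) = r * k + 1 := by exact_mod_cast Nat.eq_add_of_sub_eq (by omega) hk
  have hrR : (0 : ℝ) < r := by exact_mod_cast hr0
  have hn' : n = (r * j + 2) * k / 2 := by rw [hn, hp, hq']; field_simp; ring
  have hm' : m = j * (r * k + 2) / 2 := by rw [hm, hp, hq']; field_simp; ring
  have hk0 : (0 : ℝ) < k := by
    have : (1 : ℝ) < q := by exact_mod_cast hq
    nlinarith
  have hjk : (k : ℝ) < j := by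
    have : (q : ℝ) < p := by exact_mod_cast hpq
    nlinarith
  refine ⟨by rw [hn']; positivity, by rw [hn', hm']; nlinarith, ⟨(p + 1) * k, ?_⟩, ⟨j - k, ?_⟩⟩
  · push_cast; rw [hn', hp]; ring
  · push_cast; rw [hn', hm']; ring

theorem number_of_zeros_monotone_decreasing_general
    (p q : ℕ) (hq : 2 ≤ q) (hpq : q < p)
    (r : ℕ) (hr : r = Nat.gcd (p - 1) (q - 1))
    (m n : ℝ)
    (hm : m = ((p : ℝ) - 1) * ((q : ℝ) + 1) / (2 * r))
    (hn : n = ((p : ℝ) + 1) * ((q : ℝ) - 1) / (2 * r))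
    (C₀ : ℝ)
    (c : ℝ) (ε : ℝ) (hε : ε = 1 ∨ ε = -1)
    (T : ℝ → ℝ → ℝ)
    (hT : ∀ θ s : ℝ, T θ s = ε * s * Real.sin (n * θ + c) + C₀ * Real.sin (m * θ)) :
    ∀ s₁ s₂ : ℝ, 0 < s₁ → s₁ ≤ s₂ →
      ({θ ∈ Set.Ico (0 : ℝ) (2 * Real.pi) | T θ s₂ = 0}).ncard
        ≤ ({θ ∈ Set.Ico (0 : ℝ) (2 * Real.pi) | T θ s₁ = 0}).ncard := by
  intro s₁ s₂ hs₁ hs₁₂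
  obtain ⟨hn0, hnm, ⟨b, hb⟩, ⟨d, hd⟩⟩ := exponents_pos_lt_and_integral hq hpq hr hm hn
  have hε2 : ε * ε = 1 := by rcases hε with rfl | rfl <;> norm_num
  have hzeros : ∀ s, {θ ∈ Ico 0 (2 * π) | T θ s = 0} =
      {θ ∈ Ico 0 (2 * π) | TrigPencil.pencil (ε * C₀) c m n s θ = 0} := fun s => by
    ext θ
    have hTθ : T θ s = ε * TrigPencil.pencil (ε * C₀) c m n s θ := by
      rw [hT, TrigPencil.pencil]; linear_combination -C₀ * sin (m * θ) * hε2
    simp [hTθ, left_ne_zero_of_mul_eq_one hε2]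
  rw [hzeros, hzeros]
  exact TrigPencil.ncard_pencil_zeros_le hn0 hnm hb hd hs₁ hs₁₂

/-- Lemma 4.1: for `p > q`, the number of solutions of `T(θ, s) = 0`
in `[0, 2π)` is monotone decreasing in `s ∈ (0, ∞)`. -/
theorem number_of_zeros_monotone_decreasing
    (p q : ℕ) (hq : 2 ≤ q) (hpq : q < p)
    (r : ℕ) (hr : r = Nat.gcd (p - 1) (q - 1))
    (m n : ℝ)
    (hm : m = ((p : ℝ) - 1) * ((q : ℝ) + 1) / (2 * r))
    (hn : n = ((p : ℝ) + 1) * ((q : ℝ) - 1) / (2 * r))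
    (A B : ℝ)
    (hA : A = 1 / (p : ℝ) ^ ((1 : ℝ) / ((p : ℝ) - 1)))
    (hB : B = 1 / (q : ℝ) ^ ((1 : ℝ) / ((q : ℝ) - 1)))
    (C₀ : ℝ) (hC₀ : C₀ = ((p : ℝ) - 1) * B / (((q : ℝ) - 1) * A))
    (c : ℝ) (ε : ℝ) (hε : ε = 1 ∨ ε = -1)
    (T : ℝ → ℝ → ℝ)
    (hT : ∀ θ s : ℝ, T θ s = ε * s * Real.sin (n * θ + c) + C₀ * Real.sin (m * θ)) :
    ∀ s₁ s₂ : ℝ, 0 < s₁ → s₁ ≤ s₂ →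
      ({θ ∈ Set.Ico (0 : ℝ) (2 * Real.pi) | T θ s₂ = 0}).ncard
        ≤ ({θ ∈ Set.Ico (0 : ℝ) (2 * Real.pi) | T θ s₁ = 0}).ncard :=
  number_of_zeros_monotone_decreasing_general p q hq hpq r hr m n hm hn C₀ c ε hε T hT
end
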